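/- arXiv:2601.01351 — 2 statements merged into one kernel-verified Lean document; each statement's English description precedes it below -/
import Mathlib

section
/- Let A be a real symmetric positive definite p×p matrix with λ_min(ZᵀAZ) > λ_min(WᵀAW), let B be a real symmetric p×p matrix, and suppose Δ̂ := Δ̂(B,A) < 1. Then γ(B) is invertible (so β̂(B) is well defined) and satisfies ‖γ(B)^{-1}‖ ≤ (1/(1−Δ̂)) · 1/(λ_min(ZᵀAZ) − λ_min(WᵀAW)) and ‖γ(B)^{-1} − γ(A)^{-1}‖ ≤ (Δ̂/(1−Δ̂)) · 1/(λ_min(ZᵀAZ) − λ_min(WᵀAW)). -/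
open Matrix

/-- The spectral norm (operator 2-norm) of a real matrix. -/
noncomputable def spec {m n : ℕ} (M : Matrix (Fin m) (Fin n) ℝ) : ℝ :=
  ‖LinearMap.toContinuousLinearMap (Matrix.toEuclideanLin M)‖

/-- The smallest (real) eigenvalue of a square real matrix: `sInf` of its real spectrum.
For a symmetric matrix this is the smallest eigenvalue. -/
noncomputable def lmin {n : ℕ} (M : Matrix (Fin n) (Fin n) ℝ) : ℝ :=
  sInf (spectrum ℝ M)

/-- The largest (real) eigenvalue of a square real matrix: `sSup` of its real spectrum. -/
noncomputable def lmax {n : ℕ} (M : Matrix (Fin n) (Fin n) ℝ) : ℝ :=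
  sSup (spectrum ℝ M)

/-- The Euclidean norm of a vector in `ℝ^n`. -/
noncomputable def vnorm {n : ℕ} (v : Fin n → ℝ) : ℝ :=
  Real.sqrt (∑ i, (v i) ^ 2)

/-- `W = (Z, y)`: the `p × (m+1)` matrix obtained by appending `y` as a last column to `Z`. -/
def appendCol {p m : ℕ} (Z : Matrix (Fin p) (Fin m) ℝ) (y : Fin p → ℝ) :
    Matrix (Fin p) (Fin (m + 1)) ℝ :=
  Matrix.of fun i j => Fin.lastCases (y i) (fun k => Z i k) j

/-- `γ(A) = ZᵀAZ − λ_min(WᵀAW)·I_m`. -/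
noncomputable def gam {p m : ℕ} (Z : Matrix (Fin p) (Fin m) ℝ) (y : Fin p → ℝ)
    (A : Matrix (Fin p) (Fin p) ℝ) : Matrix (Fin m) (Fin m) ℝ :=
  Zᵀ * A * Z - lmin ((appendCol Z y)ᵀ * A * appendCol Z y) • (1 : Matrix (Fin m) (Fin m) ℝ)

/-- `δ(A) = ZᵀAy`. -/
noncomputable def del {p m : ℕ} (Z : Matrix (Fin p) (Fin m) ℝ) (y : Fin p → ℝ)
    (A : Matrix (Fin p) (Fin p) ℝ) : Fin m → ℝ :=
  (Zᵀ * A) *ᵥ y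

/-- The weighted total least squares estimator `β̂(A) = γ(A)⁻¹ δ(A)`. -/
noncomputable def betahat {p m : ℕ} (Z : Matrix (Fin p) (Fin m) ℝ) (y : Fin p → ℝ)
    (A : Matrix (Fin p) (Fin p) ℝ) : Fin m → ℝ :=
  (gam Z y A)⁻¹ *ᵥ del Z y A

/-- `Δ̂(B,A) = [(λ_max(ZᵀAZ) + λ_max(WᵀAW))/(λ_min(ZᵀAZ) − λ_min(WᵀAW))] · ‖A⁻¹‖·‖B−A‖`. -/
noncomputable def Deltahat {p m : ℕ} (Z : Matrix (Fin p) (Fin m) ℝ) (y : Fin p → ℝ)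
    (A B : Matrix (Fin p) (Fin p) ℝ) : ℝ :=
  (lmax (Zᵀ * A * Z) + lmax ((appendCol Z y)ᵀ * A * appendCol Z y)) /
      (lmin (Zᵀ * A * Z) - lmin ((appendCol Z y)ᵀ * A * appendCol Z y)) *
    (spec A⁻¹ * spec (B - A))

/-- `UB(A) = λ_max(ZᵀAZ)^{1/2}·(yᵀAy)^{1/2}/(λ_min(ZᵀAZ) − λ_min(WᵀAW))`. -/
noncomputable def UB {p m : ℕ} (Z : Matrix (Fin p) (Fin m) ℝ) (y : Fin p → ℝ)
    (A : Matrix (Fin p) (Fin p) ℝ) : ℝ :=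
  Real.sqrt (lmax (Zᵀ * A * Z)) * Real.sqrt (y ⬝ᵥ A *ᵥ y) /
    (lmin (Zᵀ * A * Z) - lmin ((appendCol Z y)ᵀ * A * appendCol Z y))

/-!
With `g = λ_min(ZᵀAZ) − λ_min(WᵀAW)`, the Rayleigh bound for `ZᵀAZ` gives `⟪x, γ(A) x⟫ ≥ g‖x‖²`.
The perturbation `γ(B) − γ(A) = Zᵀ(B − A)Z − (λ_min(WᵀBW) − λ_min(WᵀAW))·I` has norm at most
`Δ̂·g`: Weyl's inequality `|λ_min S − λ_min T| ≤ ‖S − T‖` bounds the scalar part, and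
`‖XᵀDX‖ ≤ ‖X‖²‖D‖ ≤ λ_max(XᵀAX)‖A⁻¹‖‖D‖` bounds both sandwiches. Hence
`⟪x, γ(B) x⟫ ≥ (1 − Δ̂)g‖x‖²`, so `γ(B)` is invertible with `‖γ(B)⁻¹‖ ≤ 1/((1 − Δ̂)g)`, and the
resolvent identity `γ(B)⁻¹ − γ(A)⁻¹ = γ(B)⁻¹(γ(A) − γ(B))γ(A)⁻¹` gives the second bound.
-/

open scoped Matrix.Norms.L2Operator RealInnerProductSpace

lemma spec_eq_l2_opNorm {m n : ℕ} (M : Matrix (Fin m) (Fin n) ℝ) : spec M = ‖M‖ := rfl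

lemma ContinuousLinearMap.opNorm_sq_le_of_norm_apply_sq_le {𝕜 E F : Type*}
    [NontriviallyNormedField 𝕜] [SeminormedAddCommGroup E] [SeminormedAddCommGroup F]
    [NormedSpace 𝕜 E] [NormedSpace 𝕜 F] (f : E →L[𝕜] F) {c : ℝ} (hc : 0 ≤ c)
    (h : ∀ x, ‖f x‖ ^ 2 ≤ c * ‖x‖ ^ 2) : ‖f‖ ^ 2 ≤ c := by
  have hf : ‖f‖ ≤ √c := f.opNorm_le_bound (Real.sqrt_nonneg c) fun x => by
    rw [← Real.sqrt_sq (norm_nonneg (f x)), ← Real.sqrt_sq (norm_nonneg x), ← Real.sqrt_mul hc]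
    exact Real.sqrt_le_sqrt (h x)
  exact (Real.le_sqrt (norm_nonneg f) hc).1 hf

namespace Matrix

def IsCoerciveWith {ι : Type*} [Fintype ι] [DecidableEq ι] (G : Matrix ι ι ℝ) (g : ℝ) : Prop :=
  ∀ x : EuclideanSpace ℝ ι, g * ‖x‖ ^ 2 ≤ ⟪x, toEuclideanCLM (𝕜 := ℝ) G x⟫

lemma inner_toEuclideanCLM_le {ι : Type*} [Fintype ι] [DecidableEq ι] (M : Matrix ι ι ℝ)
    (x : EuclideanSpace ℝ ι) : ⟪x, toEuclideanCLM (𝕜 := ℝ) M x⟫ ≤ ‖M‖ * ‖x‖ ^ 2 :=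
  calc ⟪x, toEuclideanCLM (𝕜 := ℝ) M x⟫ ≤ ‖x‖ * ‖toEuclideanCLM (𝕜 := ℝ) M x‖ :=
        real_inner_le_norm _ _
    _ ≤ ‖x‖ * (‖M‖ * ‖x‖) := by gcongr; exact (toEuclideanCLM (𝕜 := ℝ) M).le_opNorm x
    _ = ‖M‖ * ‖x‖ ^ 2 := by ring

lemma inner_toEuclideanCLM_smul_one {ι : Type*} [Fintype ι] [DecidableEq ι] (c : ℝ)
    (x : EuclideanSpace ℝ ι) :
    ⟪x, toEuclideanCLM (𝕜 := ℝ) (c • 1 : Matrix ι ι ℝ) x⟫ = c * ‖x‖ ^ 2 := by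
  simp [inner_smul_right]

lemma norm_smul_one_le {ι : Type*} [Fintype ι] [DecidableEq ι] (c : ℝ) :
    ‖(c • 1 : Matrix ι ι ℝ)‖ ≤ |c| := by
  rw [norm_smul, Real.norm_eq_abs]
  refine mul_le_of_le_one_right (abs_nonneg c) ?_
  rw [cstar_norm_def, map_one]
  exact ContinuousLinearMap.norm_id_le

lemma PosSemidef.inner_toEuclideanCLM_nonneg {ι : Type*} [Fintype ι] [DecidableEq ι]
    {P : Matrix ι ι ℝ} (hP : P.PosSemidef) (x : EuclideanSpace ℝ ι) :
    0 ≤ ⟪x, toEuclideanCLM (𝕜 := ℝ) P x⟫ :=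
  (isPositive_toEuclideanLin_iff.2 hP).inner_nonneg_right x

section Rayleigh

variable {n : ℕ} {M : Matrix (Fin n) (Fin n) ℝ}

lemma lmin_le_of_mem_spectrum {a : ℝ} (ha : a ∈ spectrum ℝ M) : lmin M ≤ a :=
  csInf_le M.finite_real_spectrum.bddBelow ha

lemma le_lmax_of_mem_spectrum {a : ℝ} (ha : a ∈ spectrum ℝ M) : a ≤ lmax M :=
  le_csSup M.finite_real_spectrum.bddAbove ha

lemma lmax_nonneg (hM : M.PosSemidef) : 0 ≤ lmax M :=
  Real.sSup_nonneg fun _ ha => (posSemidef_iff_isHermitian_and_spectrum_nonneg.1 hM).2 ha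

lemma IsHermitian.lmin_mem_spectrum [NeZero n] (hM : M.IsHermitian) : lmin M ∈ spectrum ℝ M :=
  (Set.nonempty_of_mem (hM.eigenvalues_mem_spectrum_real 0)).csInf_mem M.finite_real_spectrum

lemma IsHermitian.posSemidef_sub_lmin_smul_one (hM : M.IsHermitian) :
    (M - lmin M • 1).PosSemidef := by
  refine posSemidef_iff_isHermitian_and_spectrum_nonneg.2
    ⟨hM.sub (IsHermitian.smul isHermitian_one (.all _)), ?_⟩
  rw [← Algebra.algebraMap_eq_smul_one, ← spectrum.sub_singleton_eq]
  rintro _ ⟨a, ha, _, rfl, rfl⟩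
  exact sub_nonneg.2 (lmin_le_of_mem_spectrum ha)

lemma IsHermitian.posSemidef_lmax_smul_one_sub (hM : M.IsHermitian) :
    (lmax M • 1 - M).PosSemidef := by
  refine posSemidef_iff_isHermitian_and_spectrum_nonneg.2
    ⟨(IsHermitian.smul isHermitian_one (.all _)).sub hM, ?_⟩
  rw [← Algebra.algebraMap_eq_smul_one, ← spectrum.singleton_sub_eq]
  rintro _ ⟨_, rfl, a, ha, rfl⟩
  exact sub_nonneg.2 (le_lmax_of_mem_spectrum ha)

lemma IsHermitian.isCoerciveWith_lmin (hM : M.IsHermitian) : M.IsCoerciveWith (lmin M) := by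
  intro x
  have h := hM.posSemidef_sub_lmin_smul_one.inner_toEuclideanCLM_nonneg x
  rwa [map_sub, _root_.sub_apply, inner_sub_right, inner_toEuclideanCLM_smul_one,
    sub_nonneg] at h

lemma IsHermitian.inner_le_lmax_mul_norm_sq (hM : M.IsHermitian) (x : EuclideanSpace ℝ (Fin n)) :
    ⟪x, toEuclideanCLM (𝕜 := ℝ) M x⟫ ≤ lmax M * ‖x‖ ^ 2 := by
  have h := hM.posSemidef_lmax_smul_one_sub.inner_toEuclideanCLM_nonneg x
  rwa [map_sub, _root_.sub_apply, inner_sub_right, inner_toEuclideanCLM_smul_one,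
    sub_nonneg] at h

lemma IsHermitian.exists_norm_eq_one_apply_eq_lmin_smul [NeZero n] (hM : M.IsHermitian) :
    ∃ x : EuclideanSpace ℝ (Fin n), ‖x‖ = 1 ∧ toEuclideanCLM (𝕜 := ℝ) M x = lmin M • x := by
  obtain ⟨i, hi⟩ : lmin M ∈ Set.range hM.eigenvalues := by
    rw [← hM.spectrum_real_eq_range_eigenvalues]; exact hM.lmin_mem_spectrum
  exact ⟨hM.eigenvectorBasis i, hM.eigenvectorBasis.orthonormal.1 i,
    WithLp.ofLp_injective 2 (by simpa [hi] using hM.mulVec_eigenvectorBasis i)⟩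

end Rayleigh

lemma lmin_le_lmin_add_norm_sub {n : ℕ} [NeZero n] {S T : Matrix (Fin n) (Fin n) ℝ}
    (hS : S.IsHermitian) (hT : T.IsHermitian) : lmin S ≤ lmin T + ‖S - T‖ := by
  obtain ⟨x, hx, hTx⟩ := hT.exists_norm_eq_one_apply_eq_lmin_smul
  have hSx := hS.isCoerciveWith_lmin x
  have hSTx := inner_toEuclideanCLM_le (S - T) x
  rw [map_sub, _root_.sub_apply, inner_sub_right, hTx, inner_smul_right,
    real_inner_self_eq_norm_sq] at hSTx
  rw [hx] at hSx hSTx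
  linarith

lemma abs_lmin_sub_lmin_le {n : ℕ} [NeZero n] {S T : Matrix (Fin n) (Fin n) ℝ}
    (hS : S.IsHermitian) (hT : T.IsHermitian) : |lmin S - lmin T| ≤ ‖S - T‖ := by
  have h₁ := lmin_le_lmin_add_norm_sub hS hT
  have h₂ := lmin_le_lmin_add_norm_sub hT hS
  rw [norm_sub_rev] at h₂
  exact abs_sub_le_iff.2 ⟨by linarith, by linarith⟩

namespace IsCoerciveWith

variable {ι : Type*} [Fintype ι] [DecidableEq ι] {G : Matrix ι ι ℝ} {g : ℝ}

lemma mul_norm_le_norm (hG : G.IsCoerciveWith g) (x : EuclideanSpace ℝ ι) :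
    g * ‖x‖ ≤ ‖toEuclideanCLM (𝕜 := ℝ) G x‖ := by
  rcases (norm_nonneg x).eq_or_lt with hx | hx
  · rw [← hx, mul_zero]; exact norm_nonneg _
  · refine le_of_mul_le_mul_left ?_ hx
    calc ‖x‖ * (g * ‖x‖) = g * ‖x‖ ^ 2 := by ring
      _ ≤ ⟪x, toEuclideanCLM (𝕜 := ℝ) G x⟫ := hG x
      _ ≤ ‖x‖ * ‖toEuclideanCLM (𝕜 := ℝ) G x‖ := real_inner_le_norm _ _

lemma isUnit (hG : G.IsCoerciveWith g) (hg : 0 < g) : IsUnit G := by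
  refine mulVec_injective_iff_isUnit.1 fun v w hvw => ?_
  have h := hG.mul_norm_le_norm (WithLp.toLp 2 (v - w))
  rw [toEuclideanCLM_toLp, mulVec_sub, hvw, sub_self, WithLp.toLp_zero, norm_zero] at h
  have : WithLp.toLp 2 (v - w) = 0 := norm_le_zero_iff.1 (nonpos_of_mul_nonpos_right h hg)
  exact sub_eq_zero.1 (congrArg WithLp.ofLp this)

lemma norm_inv_le (hG : G.IsCoerciveWith g) (hg : 0 < g) : ‖G⁻¹‖ ≤ g⁻¹ := by
  have hGG : G * G⁻¹ = 1 := mul_nonsing_inv G ((isUnit_iff_isUnit_det G).1 (hG.isUnit hg))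
  refine ContinuousLinearMap.opNorm_le_bound _ (inv_nonneg.2 hg.le) fun y => ?_
  have h := hG.mul_norm_le_norm (toEuclideanCLM (𝕜 := ℝ) G⁻¹ y)
  rw [← mul_apply_eq_comp, ← map_mul, hGG, map_one, one_apply_eq_self] at h
  rwa [inv_mul_eq_div, le_div_iff₀' hg]

lemma mono (hG : G.IsCoerciveWith g) {g' : ℝ} (hg' : g' ≤ g) : G.IsCoerciveWith g' :=
  fun x => le_trans (by gcongr) (hG x)

lemma sub_norm_sub (hG : G.IsCoerciveWith g) (H : Matrix ι ι ℝ) :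
    H.IsCoerciveWith (g - ‖H - G‖) := by
  intro x
  have hGH := inner_toEuclideanCLM_le (G - H) x
  rw [map_sub, _root_.sub_apply, inner_sub_right, norm_sub_rev] at hGH
  linarith [hG x]

theorem isUnit_det_and_norm_inv_le_of_norm_sub_le (hG : G.IsCoerciveWith g) (hg : 0 < g)
    {H : Matrix ι ι ℝ} {Δ : ℝ} (hHG : ‖H - G‖ ≤ Δ * g) (hΔ : Δ < 1) :
    IsUnit H.det ∧ ‖H⁻¹‖ ≤ 1 / (1 - Δ) * (1 / g) ∧ ‖H⁻¹ - G⁻¹‖ ≤ Δ / (1 - Δ) * (1 / g) := by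
  have hgH : 0 < (1 - Δ) * g := mul_pos (sub_pos.2 hΔ) hg
  have hH : H.IsCoerciveWith ((1 - Δ) * g) := (hG.sub_norm_sub H).mono (by linarith)
  have hresolvent : H⁻¹ - G⁻¹ = H⁻¹ * (G - H) * G⁻¹ := by
    simp only [nonsing_inv_eq_ringInverse]
    exact Ring.inverse_sub_inverse (iff_of_true (hH.isUnit hgH) (hG.isUnit hg))
  refine ⟨(isUnit_iff_isUnit_det H).1 (hH.isUnit hgH), ?_, ?_⟩
  · calc ‖H⁻¹‖ ≤ ((1 - Δ) * g)⁻¹ := hH.norm_inv_le hgH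
      _ = 1 / (1 - Δ) * (1 / g) := by field_simp
  · calc ‖H⁻¹ - G⁻¹‖ ≤ ‖H⁻¹‖ * ‖G - H‖ * ‖G⁻¹‖ := by
          rw [hresolvent]; exact norm_mul₃_le
      _ ≤ ((1 - Δ) * g)⁻¹ * (Δ * g) * g⁻¹ := by
          rw [norm_sub_rev]
          gcongr
          · exact mul_nonneg (inv_nonneg.2 hgH.le) ((norm_nonneg _).trans hHG)
          · exact hH.norm_inv_le hgH
          · exact hG.norm_inv_le hg
      _ = Δ / (1 - Δ) * (1 / g) := by field_simp

end IsCoerciveWith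

section Sandwich

variable {n k : ℕ} {A : Matrix (Fin n) (Fin n) ℝ}

lemma IsHermitian.transpose_mul_mul (hA : A.IsHermitian) (X : Matrix (Fin n) (Fin k) ℝ) :
    (Xᵀ * A * X).IsHermitian := by
  simpa only [conjTranspose_eq_transpose_of_trivial] using isHermitian_conjTranspose_mul_mul X hA

lemma inner_toEuclideanCLM_transpose_mul_mul (A : Matrix (Fin n) (Fin n) ℝ)
    (X : Matrix (Fin n) (Fin k) ℝ) (x : EuclideanSpace ℝ (Fin k)) :
    ⟪x, toEuclideanCLM (𝕜 := ℝ) (Xᵀ * A * X) x⟫ =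
      ⟪toEuclideanLin X x, toEuclideanCLM (𝕜 := ℝ) A (toEuclideanLin X x)⟫ := by
  rw [inner_toEuclideanCLM, inner_toEuclideanCLM, ofLp_toLpLin, toLin'_apply, ← mulVec_mulVec,
    ← mulVec_mulVec, dotProduct_mulVec _ Xᵀ, vecMul_transpose]

lemma PosDef.one_le_lmin_mul_norm_inv [NeZero n] (hA : A.PosDef) : 1 ≤ lmin A * ‖A⁻¹‖ := by
  obtain ⟨x, hx, hAx⟩ := hA.isHermitian.exists_norm_eq_one_apply_eq_lmin_smul
  have hlmin : 0 ≤ lmin A := by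
    simpa [hAx, inner_smul_right, hx] using hA.posSemidef.inner_toEuclideanCLM_nonneg x
  have hx' : toEuclideanCLM (𝕜 := ℝ) A⁻¹ (toEuclideanCLM (𝕜 := ℝ) A x) = x := by
    rw [← mul_apply_eq_comp, ← map_mul, nonsing_inv_mul A ((isUnit_iff_isUnit_det A).1 hA.isUnit),
      map_one, one_apply_eq_self]
  calc 1 = ‖x‖ := hx.symm
    _ = ‖toEuclideanCLM (𝕜 := ℝ) A⁻¹ (lmin A • x)‖ := by rw [← hAx, hx']
    _ ≤ ‖A⁻¹‖ * ‖lmin A • x‖ := (toEuclideanCLM (𝕜 := ℝ) A⁻¹).le_opNorm _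
    _ = lmin A * ‖A⁻¹‖ := by rw [norm_smul, hx, Real.norm_of_nonneg hlmin]; ring

lemma PosDef.norm_sq_le_norm_inv_mul_inner [NeZero n] (hA : A.PosDef)
    (v : EuclideanSpace ℝ (Fin n)) : ‖v‖ ^ 2 ≤ ‖A⁻¹‖ * ⟪v, toEuclideanCLM (𝕜 := ℝ) A v⟫ :=
  calc ‖v‖ ^ 2 ≤ lmin A * ‖A⁻¹‖ * ‖v‖ ^ 2 :=
        le_mul_of_one_le_left (sq_nonneg _) hA.one_le_lmin_mul_norm_inv
    _ = ‖A⁻¹‖ * (lmin A * ‖v‖ ^ 2) := by ring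
    _ ≤ ‖A⁻¹‖ * ⟪v, toEuclideanCLM (𝕜 := ℝ) A v⟫ := by
        gcongr; exact hA.isHermitian.isCoerciveWith_lmin v

lemma PosDef.norm_sq_le_norm_inv_mul_lmax [NeZero n] (hA : A.PosDef)
    (X : Matrix (Fin n) (Fin k) ℝ) : ‖X‖ ^ 2 ≤ ‖A⁻¹‖ * lmax (Xᵀ * A * X) := by
  refine ContinuousLinearMap.opNorm_sq_le_of_norm_apply_sq_le _
    (mul_nonneg (norm_nonneg _) (lmax_nonneg ?_)) fun x => ?_
  · simpa only [conjTranspose_eq_transpose_of_trivial] using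
      hA.posSemidef.conjTranspose_mul_mul_same X
  calc ‖toEuclideanLin X x‖ ^ 2
      ≤ ‖A⁻¹‖ * ⟪toEuclideanLin X x, toEuclideanCLM (𝕜 := ℝ) A (toEuclideanLin X x)⟫ :=
        hA.norm_sq_le_norm_inv_mul_inner _
    _ = ‖A⁻¹‖ * ⟪x, toEuclideanCLM (𝕜 := ℝ) (Xᵀ * A * X) x⟫ := by
        rw [inner_toEuclideanCLM_transpose_mul_mul]
    _ ≤ ‖A⁻¹‖ * (lmax (Xᵀ * A * X) * ‖x‖ ^ 2) := by
        gcongr; exact (hA.isHermitian.transpose_mul_mul X).inner_le_lmax_mul_norm_sq x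
    _ = ‖A⁻¹‖ * lmax (Xᵀ * A * X) * ‖x‖ ^ 2 := by ring

lemma PosDef.norm_transpose_mul_mul_le [NeZero n] (hA : A.PosDef) (X : Matrix (Fin n) (Fin k) ℝ)
    (D : Matrix (Fin n) (Fin n) ℝ) : ‖Xᵀ * D * X‖ ≤ lmax (Xᵀ * A * X) * (‖A⁻¹‖ * ‖D‖) :=
  calc ‖Xᵀ * D * X‖ ≤ ‖Xᵀ‖ * ‖D‖ * ‖X‖ :=
        (l2_opNorm_mul _ _).trans (by gcongr; exact l2_opNorm_mul _ _)
    _ = ‖X‖ ^ 2 * ‖D‖ := by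
        rw [← conjTranspose_eq_transpose_of_trivial, l2_opNorm_conjTranspose]; ring
    _ ≤ ‖A⁻¹‖ * lmax (Xᵀ * A * X) * ‖D‖ := by gcongr; exact hA.norm_sq_le_norm_inv_mul_lmax X
    _ = lmax (Xᵀ * A * X) * (‖A⁻¹‖ * ‖D‖) := by ring

end Sandwich

end Matrix

section WeightedTLS

variable {p m : ℕ} (Z : Matrix (Fin p) (Fin m) ℝ) (y : Fin p → ℝ)

lemma gam_isCoerciveWith {A : Matrix (Fin p) (Fin p) ℝ} (hA : A.IsHermitian) :
    (gam Z y A).IsCoerciveWith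
      (lmin (Zᵀ * A * Z) - lmin ((appendCol Z y)ᵀ * A * appendCol Z y)) := by
  intro x
  rw [gam, map_sub, _root_.sub_apply, inner_sub_right, inner_toEuclideanCLM_smul_one, sub_mul]
  gcongr
  exact (hA.transpose_mul_mul Z).isCoerciveWith_lmin x

lemma gam_sub_gam (A B : Matrix (Fin p) (Fin p) ℝ) :
    gam Z y B - gam Z y A = Zᵀ * (B - A) * Z -
      (lmin ((appendCol Z y)ᵀ * B * appendCol Z y) -
        lmin ((appendCol Z y)ᵀ * A * appendCol Z y)) • (1 : Matrix (Fin m) (Fin m) ℝ) := by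
  simp only [gam, Matrix.mul_sub, Matrix.sub_mul, sub_smul]
  abel

lemma norm_gam_sub_gam_le [NeZero p] {A B : Matrix (Fin p) (Fin p) ℝ} (hA : A.PosDef)
    (hB : B.IsHermitian) :
    ‖gam Z y B - gam Z y A‖ ≤
      (lmax (Zᵀ * A * Z) + lmax ((appendCol Z y)ᵀ * A * appendCol Z y)) * (‖A⁻¹‖ * ‖B - A‖) := by
  set W := appendCol Z y
  have hweyl : |lmin (Wᵀ * B * W) - lmin (Wᵀ * A * W)| ≤ ‖Wᵀ * (B - A) * W‖ := by
    simpa only [Matrix.mul_sub, Matrix.sub_mul] using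
      abs_lmin_sub_lmin_le (hB.transpose_mul_mul W) (hA.isHermitian.transpose_mul_mul W)
  calc ‖gam Z y B - gam Z y A‖
      ≤ ‖Zᵀ * (B - A) * Z‖ + |lmin (Wᵀ * B * W) - lmin (Wᵀ * A * W)| := by
        rw [gam_sub_gam]
        exact (norm_sub_le _ _).trans (by gcongr; exact norm_smul_one_le _)
    _ ≤ lmax (Zᵀ * A * Z) * (‖A⁻¹‖ * ‖B - A‖) + lmax (Wᵀ * A * W) * (‖A⁻¹‖ * ‖B - A‖) :=
        add_le_add (hA.norm_transpose_mul_mul_le Z _)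
          (hweyl.trans (hA.norm_transpose_mul_mul_le W _))
    _ = _ := by ring

lemma Deltahat_mul_gap (A B : Matrix (Fin p) (Fin p) ℝ)
    (hgap : lmin (Zᵀ * A * Z) - lmin ((appendCol Z y)ᵀ * A * appendCol Z y) ≠ 0) :
    Deltahat Z y A B * (lmin (Zᵀ * A * Z) - lmin ((appendCol Z y)ᵀ * A * appendCol Z y)) =
      (lmax (Zᵀ * A * Z) + lmax ((appendCol Z y)ᵀ * A * appendCol Z y)) * (‖A⁻¹‖ * ‖B - A‖) := by
  rw [Deltahat, spec_eq_l2_opNorm, spec_eq_l2_opNorm, mul_right_comm, div_mul_cancel₀ _ hgap]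

end WeightedTLS

theorem stmt5_general {p m : ℕ} (hp : 0 < p)
    (Z : Matrix (Fin p) (Fin m) ℝ) (y : Fin p → ℝ)
    (A B : Matrix (Fin p) (Fin p) ℝ) (hA : A.PosDef) (hBsymm : B.IsSymm)
    (hgap : lmin ((appendCol Z y)ᵀ * A * appendCol Z y) < lmin (Zᵀ * A * Z))
    (hD : Deltahat Z y A B < 1) :
    IsUnit (gam Z y B).det ∧
      spec (gam Z y B)⁻¹ ≤
        1 / (1 - Deltahat Z y A B) *
          (1 / (lmin (Zᵀ * A * Z) - lmin ((appendCol Z y)ᵀ * A * appendCol Z y))) ∧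
      spec ((gam Z y B)⁻¹ - (gam Z y A)⁻¹) ≤
        Deltahat Z y A B / (1 - Deltahat Z y A B) *
          (1 / (lmin (Zᵀ * A * Z) - lmin ((appendCol Z y)ᵀ * A * appendCol Z y))) := by
  have : NeZero p := ⟨hp.ne'⟩
  have hgap_pos := sub_pos.2 hgap
  have hperturb : ‖gam Z y B - gam Z y A‖ ≤
      Deltahat Z y A B * (lmin (Zᵀ * A * Z) - lmin ((appendCol Z y)ᵀ * A * appendCol Z y)) := by
    rw [Deltahat_mul_gap Z y A B hgap_pos.ne']
    exact norm_gam_sub_gam_le Z y hA (isHermitian_iff_isSymm.2 hBsymm)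
  simp only [spec_eq_l2_opNorm]
  exact (gam_isCoerciveWith Z y hA.isHermitian).isUnit_det_and_norm_inv_le_of_norm_sub_le
    hgap_pos hperturb hD

/-- If `A` is symmetric positive definite with `λ_min(ZᵀAZ) > λ_min(WᵀAW)`, `B` is
symmetric, and `Δ̂(B,A) < 1`, then `γ(B)` is invertible (so `β̂(B)` is well defined),
`‖γ(B)⁻¹‖ ≤ (1/(1−Δ̂))·1/(λ_min(ZᵀAZ) − λ_min(WᵀAW))`, and
`‖γ(B)⁻¹ − γ(A)⁻¹‖ ≤ (Δ̂/(1−Δ̂))·1/(λ_min(ZᵀAZ) − λ_min(WᵀAW))`. -/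
theorem stmt5 {p m : ℕ} (hp : 0 < p) (hm : 0 < m)
    (Z : Matrix (Fin p) (Fin m) ℝ) (y : Fin p → ℝ)
    (A B : Matrix (Fin p) (Fin p) ℝ) (hA : A.PosDef) (hBsymm : B.IsSymm)
    (hgap : lmin ((appendCol Z y)ᵀ * A * appendCol Z y) < lmin (Zᵀ * A * Z))
    (hD : Deltahat Z y A B < 1) :
    IsUnit (gam Z y B).det ∧
      spec (gam Z y B)⁻¹ ≤
        1 / (1 - Deltahat Z y A B) *
          (1 / (lmin (Zᵀ * A * Z) - lmin ((appendCol Z y)ᵀ * A * appendCol Z y))) ∧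
      spec ((gam Z y B)⁻¹ - (gam Z y A)⁻¹) ≤
        Deltahat Z y A B / (1 - Deltahat Z y A B) *
          (1 / (lmin (Zᵀ * A * Z) - lmin ((appendCol Z y)ᵀ * A * appendCol Z y))) :=
  stmt5_general hp Z y A B hA hBsymm hgap hD
end

section
/- Let A be a real symmetric positive definite p×p matrix with λ_min(ZᵀAZ) > λ_min(WᵀAW) (so that β̂(A) is well defined), let B be a real symmetric p×p matrix, and suppose Δ̂ := Δ̂(B,A) < 1. Then β̂(B) is well defined and ‖β̂(B)‖ ≤ ((1+Δ̂)/(1−Δ̂)) · UB(A). -/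
open Matrix

/-!
Write `ε = ‖A⁻¹‖‖B - A‖`. Since `|vᵀ(B - A)v| ≤ ‖B - A‖‖v‖² ≤ ε vᵀAv`, the quadratic forms of
`MᵀBM` and `MᵀAM` agree up to a relative error `ε`, so their smallest eigenvalues differ by at
most `ε λ_max(MᵀAM)`. Taking `M = Z` and `M = W` shows that the gap
`λ_min(ZᵀBZ) - λ_min(WᵀBW)` is at least `1 - Δ̂` times the gap for `A`, hence positive. As
`γ(B)` dominates that gap times the identity, it is positive definite and `‖β̂(B)‖` is at most
`‖δ(B)‖` divided by the gap. Finally, Cauchy–Schwarz for the form of `A` bounds `‖δ(A)‖` by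
`λ_max(ZᵀAZ)^{1/2} (yᵀAy)^{1/2}` and `‖δ(B) - δ(A)‖` by `ε` times the same quantity, and
`ε ≤ Δ̂` because the gap for `A` is at most `λ_max(ZᵀAZ) + λ_max(WᵀAW)`.
-/

section Euclidean

variable {k n : ℕ}

lemma vnorm_eq_norm (v : Fin n → ℝ) : vnorm v = ‖WithLp.toLp 2 v‖ := by
  simp [vnorm, EuclideanSpace.norm_eq]

lemma vnorm_eq_sqrt (v : Fin n → ℝ) : vnorm v = √(v ⬝ᵥ v) := by
  simp [vnorm, dotProduct, sq]

lemma vnorm_nonneg (v : Fin n → ℝ) : 0 ≤ vnorm v := Real.sqrt_nonneg _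

lemma dotProduct_self_nonneg (v : Fin n → ℝ) : 0 ≤ v ⬝ᵥ v := by
  simpa using dotProduct_self_star_nonneg v

lemma dotProduct_self_pos {v : Fin n → ℝ} (hv : v ≠ 0) : 0 < v ⬝ᵥ v :=
  (dotProduct_self_nonneg v).lt_of_ne (Ne.symm (dotProduct_self_eq_zero.not.2 hv))

lemma vnorm_sq (v : Fin n → ℝ) : vnorm v ^ 2 = v ⬝ᵥ v := by
  rw [vnorm_eq_sqrt, Real.sq_sqrt (dotProduct_self_nonneg v)]

lemma vnorm_add_le (u v : Fin n → ℝ) : vnorm (u + v) ≤ vnorm u + vnorm v := by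
  simpa only [vnorm_eq_norm, WithLp.toLp_add] using norm_add_le _ _

lemma abs_dotProduct_le_vnorm_mul_vnorm (u v : Fin n → ℝ) : |u ⬝ᵥ v| ≤ vnorm u * vnorm v := by
  simpa [vnorm_eq_norm, EuclideanSpace.inner_toLp_toLp, dotProduct_comm] using
    abs_real_inner_le_norm (WithLp.toLp 2 u) (WithLp.toLp 2 v)

lemma dotProduct_le_vnorm_mul_vnorm (u v : Fin n → ℝ) : u ⬝ᵥ v ≤ vnorm u * vnorm v :=
  (le_abs_self _).trans (abs_dotProduct_le_vnorm_mul_vnorm u v)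

lemma spec_nonneg (M : Matrix (Fin k) (Fin n) ℝ) : 0 ≤ spec M := norm_nonneg _

lemma vnorm_mulVec_le (M : Matrix (Fin k) (Fin n) ℝ) (v : Fin n → ℝ) :
    vnorm (M *ᵥ v) ≤ spec M * vnorm v := by
  rw [vnorm_eq_norm, vnorm_eq_norm]
  exact (LinearMap.toContinuousLinearMap (toEuclideanLin M)).le_opNorm (WithLp.toLp 2 v)

lemma abs_dotProduct_mulVec_le_spec_mul (M : Matrix (Fin n) (Fin n) ℝ) (u : Fin n → ℝ) :
    |u ⬝ᵥ M *ᵥ u| ≤ spec M * (u ⬝ᵥ u) := by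
  calc |u ⬝ᵥ M *ᵥ u| ≤ vnorm u * (spec M * vnorm u) :=
        (abs_dotProduct_le_vnorm_mul_vnorm _ _).trans
          (mul_le_mul_of_nonneg_left (vnorm_mulVec_le M u) (vnorm_nonneg u))
    _ = spec M * (u ⬝ᵥ u) := by rw [← vnorm_sq]; ring

lemma vnorm_le_of_forall_dotProduct_le {v : Fin n → ℝ} {C : ℝ} (hC : 0 ≤ C)
    (h : ∀ x, v ⬝ᵥ x ≤ C * vnorm x) : vnorm v ≤ C := by
  rcases (vnorm_nonneg v).eq_or_lt with hv | hv
  · rw [← hv]; exact hC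
  · refine le_of_mul_le_mul_right ?_ hv
    simpa [← vnorm_sq, sq] using h v

lemma mul_vnorm_le_vnorm_mulVec {G : Matrix (Fin n) (Fin n) ℝ} {c : ℝ}
    (h : ∀ x, c * (x ⬝ᵥ x) ≤ x ⬝ᵥ G *ᵥ x) (x : Fin n → ℝ) : c * vnorm x ≤ vnorm (G *ᵥ x) := by
  rcases (vnorm_nonneg x).eq_or_lt with hx | hx
  · rw [← hx, mul_zero]; exact vnorm_nonneg _
  · refine le_of_mul_le_mul_right ?_ hx
    calc c * vnorm x * vnorm x = c * (x ⬝ᵥ x) := by rw [← vnorm_sq]; ring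
      _ ≤ x ⬝ᵥ G *ᵥ x := h x
      _ ≤ vnorm x * vnorm (G *ᵥ x) := dotProduct_le_vnorm_mul_vnorm _ _
      _ = vnorm (G *ᵥ x) * vnorm x := mul_comm _ _

end Euclidean

section Rayleigh

open scoped MatrixOrder

variable {n : ℕ} {M : Matrix (Fin n) (Fin n) ℝ}

lemma lmin_mul_dotProduct_le (hM : M.IsHermitian) (x : Fin n → ℝ) :
    lmin M * (x ⬝ᵥ x) ≤ x ⬝ᵥ M *ᵥ x := by
  have h : algebraMap ℝ _ (lmin M) ≤ M :=
    (algebraMap_le_iff_le_spectrum hM.isSelfAdjoint).2 fun _ hμ =>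
      csInf_le (finite_real_spectrum (A := M)).bddBelow hμ
  simpa [sub_mulVec, Algebra.algebraMap_eq_smul_one, smul_mulVec, dotProduct_sub] using
    (le_iff.1 h).dotProduct_mulVec_nonneg x

lemma dotProduct_mulVec_le_lmax_mul (hM : M.IsHermitian) (x : Fin n → ℝ) :
    x ⬝ᵥ M *ᵥ x ≤ lmax M * (x ⬝ᵥ x) := by
  have h : M ≤ algebraMap ℝ _ (lmax M) :=
    (le_algebraMap_iff_spectrum_le hM.isSelfAdjoint).2 fun _ hμ =>
      le_csSup (finite_real_spectrum (A := M)).bddAbove hμ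
  simpa [sub_mulVec, Algebra.algebraMap_eq_smul_one, smul_mulVec, dotProduct_sub] using
    (le_iff.1 h).dotProduct_mulVec_nonneg x

lemma Matrix.IsHermitian.spectrum_real_nonempty (hM : M.IsHermitian) (hn : 0 < n) :
    (spectrum ℝ M).Nonempty := by
  rw [hM.spectrum_real_eq_range_eigenvalues]
  exact Set.range_nonempty_iff_nonempty.2 ⟨⟨0, hn⟩⟩

lemma exists_ne_zero_dotProduct_mulVec_eq_lmin (hM : M.IsHermitian) (hn : 0 < n) :
    ∃ x ≠ 0, x ⬝ᵥ M *ᵥ x = lmin M * (x ⬝ᵥ x) := by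
  have hmem : lmin M ∈ spectrum ℝ M :=
    (hM.spectrum_real_nonempty hn).csInf_mem finite_real_spectrum
  rw [← spectrum_toLin', ← Module.End.hasEigenvalue_iff_mem_spectrum] at hmem
  obtain ⟨x, hx⟩ := hmem.exists_hasEigenvector
  refine ⟨x, hx.2, ?_⟩
  rw [← toLin'_apply, hx.apply_eq_smul, dotProduct_smul, smul_eq_mul]

lemma lmin_le_lmax (M : Matrix (Fin n) (Fin n) ℝ) : lmin M ≤ lmax M :=
  Real.sInf_le_sSup _ finite_real_spectrum.bddBelow finite_real_spectrum.bddAbove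

lemma lmin_nonneg (hM : M.PosSemidef) : 0 ≤ lmin M :=
  Real.sInf_nonneg fun _ hμ => spectrum_nonneg_of_nonneg hM.nonneg hμ

end Rayleigh

section QuadraticForm

variable {k n : ℕ} {A : Matrix (Fin n) (Fin n) ℝ}

lemma Matrix.PosSemidef.dotProduct_mulVec_self_nonneg (hA : A.PosSemidef) (x : Fin n → ℝ) :
    0 ≤ x ⬝ᵥ A *ᵥ x := by
  simpa using hA.dotProduct_mulVec_nonneg x

lemma dotProduct_mulVec_le_sqrt_mul_sqrt (hA : A.PosSemidef) (u v : Fin n → ℝ) :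
    u ⬝ᵥ A *ᵥ v ≤ √(u ⬝ᵥ A *ᵥ u) * √(v ⬝ᵥ A *ᵥ v) := by
  have hsymm : LinearMap.IsSymm (toBilin' A) :=
    LinearMap.BilinForm.isSymm_iff.1 (isSymm_toBilin'_iff_isSymm.2 hA.isHermitian)
  have hcs := (toBilin' A).apply_sq_le_of_symm
    (fun x => (toBilin'_apply' A x x).symm ▸ hA.dotProduct_mulVec_self_nonneg x) hsymm u v
  simp only [toBilin'_apply'] at hcs
  rw [← Real.sqrt_mul' _ (hA.dotProduct_mulVec_self_nonneg v)]
  exact Real.le_sqrt_of_sq_le hcs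

lemma dotProduct_mulVec_transpose_mul_mul (M : Matrix (Fin n) (Fin k) ℝ)
    (C : Matrix (Fin n) (Fin n) ℝ) (x : Fin k → ℝ) :
    x ⬝ᵥ (Mᵀ * C * M) *ᵥ x = (M *ᵥ x) ⬝ᵥ C *ᵥ (M *ᵥ x) := by
  rw [Matrix.mul_assoc, ← mulVec_mulVec, dotProduct_mulVec, vecMul_transpose, mulVec_mulVec]

lemma dotProduct_self_le_spec_inv_mul (hA : A.PosDef) (u : Fin n → ℝ) :
    u ⬝ᵥ u ≤ spec A⁻¹ * (u ⬝ᵥ A *ᵥ u) := by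
  have hAA : A * A⁻¹ = 1 := mul_nonsing_inv A ((isUnit_iff_isUnit_det A).1 hA.isUnit)
  set w := A⁻¹ *ᵥ u
  have huw : u ⬝ᵥ A *ᵥ w = u ⬝ᵥ u := by
    rw [mulVec_mulVec, hAA, one_mulVec]
  have hww : w ⬝ᵥ A *ᵥ w ≤ spec A⁻¹ * (u ⬝ᵥ u) := by
    rw [mulVec_mulVec, hAA, one_mulVec, dotProduct_comm]
    exact (le_abs_self _).trans (abs_dotProduct_mulVec_le_spec_mul _ _)
  have ha := hA.posSemidef.dotProduct_mulVec_self_nonneg u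
  have hs := dotProduct_self_nonneg u
  have hc := spec_nonneg A⁻¹
  have hcs : (u ⬝ᵥ u) ^ 2 ≤ (u ⬝ᵥ A *ᵥ u) * (spec A⁻¹ * (u ⬝ᵥ u)) := by
    rw [← Real.sq_sqrt (mul_nonneg ha (mul_nonneg hc hs)), Real.sqrt_mul ha]
    refine pow_le_pow_left₀ hs ?_ 2
    calc u ⬝ᵥ u = u ⬝ᵥ A *ᵥ w := huw.symm
      _ ≤ √(u ⬝ᵥ A *ᵥ u) * √(w ⬝ᵥ A *ᵥ w) := dotProduct_mulVec_le_sqrt_mul_sqrt hA.posSemidef u w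
      _ ≤ √(u ⬝ᵥ A *ᵥ u) * √(spec A⁻¹ * (u ⬝ᵥ u)) := by gcongr
  rcases hs.eq_or_lt with h0 | h0
  · rw [← h0]; positivity
  · nlinarith

lemma vnorm_le_sqrt_spec_inv_mul_sqrt (hA : A.PosDef) (u : Fin n → ℝ) :
    vnorm u ≤ √(spec A⁻¹) * √(u ⬝ᵥ A *ᵥ u) := by
  rw [vnorm_eq_sqrt, ← Real.sqrt_mul (spec_nonneg _)]
  exact Real.sqrt_le_sqrt (dotProduct_self_le_spec_inv_mul hA u)

lemma abs_dotProduct_mulVec_sub_le (hA : A.PosDef) (B : Matrix (Fin n) (Fin n) ℝ)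
    (u : Fin n → ℝ) :
    |u ⬝ᵥ B *ᵥ u - u ⬝ᵥ A *ᵥ u| ≤ spec A⁻¹ * spec (B - A) * (u ⬝ᵥ A *ᵥ u) := by
  rw [← dotProduct_sub, ← sub_mulVec]
  calc |u ⬝ᵥ (B - A) *ᵥ u| ≤ spec (B - A) * (u ⬝ᵥ u) := abs_dotProduct_mulVec_le_spec_mul _ _
    _ ≤ spec (B - A) * (spec A⁻¹ * (u ⬝ᵥ A *ᵥ u)) :=
      mul_le_mul_of_nonneg_left (dotProduct_self_le_spec_inv_mul hA u) (spec_nonneg _)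
    _ = spec A⁻¹ * spec (B - A) * (u ⬝ᵥ A *ᵥ u) := by ring

lemma isHermitian_transpose_mul_mul {C : Matrix (Fin n) (Fin n) ℝ} (hC : C.IsHermitian)
    (M : Matrix (Fin n) (Fin k) ℝ) : (Mᵀ * C * M).IsHermitian := by
  simpa using isHermitian_conjTranspose_mul_mul M hC

lemma sqrt_dotProduct_mulVec_le_sqrt_lmax_mul (hA : A.IsHermitian)
    (M : Matrix (Fin n) (Fin k) ℝ) (x : Fin k → ℝ) :
    √((M *ᵥ x) ⬝ᵥ A *ᵥ (M *ᵥ x)) ≤ √(lmax (Mᵀ * A * M)) * vnorm x := by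
  rw [← dotProduct_mulVec_transpose_mul_mul, vnorm_eq_sqrt,
    ← Real.sqrt_mul' _ (dotProduct_self_nonneg x)]
  exact Real.sqrt_le_sqrt (dotProduct_mulVec_le_lmax_mul (isHermitian_transpose_mul_mul hA M) x)

lemma posSemidef_transpose_mul_mul (hA : A.PosSemidef) (M : Matrix (Fin n) (Fin k) ℝ) :
    (Mᵀ * A * M).PosSemidef := by
  simpa using hA.conjTranspose_mul_mul_same M

end QuadraticForm

section Perturbation

variable {k : ℕ} {P Q : Matrix (Fin k) (Fin k) ℝ} {ε : ℝ}

lemma abs_lmin_sub_lmin_le (hP : P.IsHermitian) (hQ : Q.IsHermitian) (hk : 0 < k) (hε : 0 ≤ ε)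
    (h : ∀ x, |x ⬝ᵥ Q *ᵥ x - x ⬝ᵥ P *ᵥ x| ≤ ε * (x ⬝ᵥ P *ᵥ x)) :
    |lmin Q - lmin P| ≤ ε * lmax P := by
  rw [abs_le]
  constructor
  · obtain ⟨x, hx, hxQ⟩ := exists_ne_zero_dotProduct_mulVec_eq_lmin hQ hk
    have h1 := abs_le.1 (h x)
    have h2 := lmin_mul_dotProduct_le hP x
    have h3 := dotProduct_mulVec_le_lmax_mul hP x
    have hs := dotProduct_self_pos hx
    nlinarith
  · obtain ⟨x, hx, hxP⟩ := exists_ne_zero_dotProduct_mulVec_eq_lmin hP hk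
    have h1 := abs_le.1 (h x)
    have h2 := lmin_mul_dotProduct_le hQ x
    have hs := dotProduct_self_pos hx
    have h3 := mul_nonneg (mul_nonneg hε (sub_nonneg.2 (lmin_le_lmax P))) hs.le
    rw [hxP] at h1
    nlinarith

end Perturbation

section Estimator

variable {p m : ℕ} (Z : Matrix (Fin p) (Fin m) ℝ) (y : Fin p → ℝ)
  {A B : Matrix (Fin p) (Fin p) ℝ}

noncomputable def gap (A : Matrix (Fin p) (Fin p) ℝ) : ℝ :=
  lmin (Zᵀ * A * Z) - lmin ((appendCol Z y)ᵀ * A * appendCol Z y)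

lemma abs_lmin_transpose_mul_mul_sub_le {k : ℕ} (hA : A.PosDef) (hB : B.IsHermitian)
    (M : Matrix (Fin p) (Fin k) ℝ) (hk : 0 < k) :
    |lmin (Mᵀ * B * M) - lmin (Mᵀ * A * M)| ≤ spec A⁻¹ * spec (B - A) * lmax (Mᵀ * A * M) :=
  abs_lmin_sub_lmin_le (isHermitian_transpose_mul_mul hA.isHermitian M)
    (isHermitian_transpose_mul_mul hB M) hk (mul_nonneg (spec_nonneg _) (spec_nonneg _))
    fun x => by
      simpa only [dotProduct_mulVec_transpose_mul_mul] using
        abs_dotProduct_mulVec_sub_le hA B (M *ᵥ x)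

lemma gap_sub_le_gap (hA : A.PosDef) (hB : B.IsHermitian) (hm : 0 < m) :
    gap Z y A - spec A⁻¹ * spec (B - A) *
      (lmax (Zᵀ * A * Z) + lmax ((appendCol Z y)ᵀ * A * appendCol Z y)) ≤ gap Z y B := by
  have hZ := abs_le.1 (abs_lmin_transpose_mul_mul_sub_le hA hB Z hm)
  have hW := abs_le.1 (abs_lmin_transpose_mul_mul_sub_le hA hB (appendCol Z y) m.succ_pos)
  simp only [gap]
  linarith [hZ.1, hW.2]

lemma gap_mul_dotProduct_le (hB : B.IsHermitian) (x : Fin m → ℝ) :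
    gap Z y B * (x ⬝ᵥ x) ≤ x ⬝ᵥ gam Z y B *ᵥ x := by
  rw [gam, sub_mulVec, smul_mulVec, one_mulVec, dotProduct_sub, dotProduct_smul, smul_eq_mul,
    gap, sub_mul]
  linarith [lmin_mul_dotProduct_le (isHermitian_transpose_mul_mul hB Z) x]

lemma gam_posDef (hB : B.IsHermitian) (hgap : 0 < gap Z y B) : (gam Z y B).PosDef := by
  refine PosDef.of_dotProduct_mulVec_pos ?_ fun x hx => ?_
  · exact (isHermitian_transpose_mul_mul hB Z).sub (isHermitian_one.smul (.all _))
  · simpa using (mul_pos hgap (dotProduct_self_pos hx)).trans_le (gap_mul_dotProduct_le Z y hB x)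

lemma spec_mul_spec_le_deltahat (hA : A.PosDef) (hgap : 0 < gap Z y A) :
    spec A⁻¹ * spec (B - A) ≤ Deltahat Z y A B := by
  have hW := lmin_nonneg (posSemidef_transpose_mul_mul hA.posSemidef (appendCol Z y))
  have hK : gap Z y A ≤ lmax (Zᵀ * A * Z) + lmax ((appendCol Z y)ᵀ * A * appendCol Z y) := by
    rw [gap]
    linarith [lmin_le_lmax (Zᵀ * A * Z), lmin_le_lmax ((appendCol Z y)ᵀ * A * appendCol Z y)]
  exact le_mul_of_one_le_left (mul_nonneg (spec_nonneg _) (spec_nonneg _))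
    ((one_le_div hgap).2 hK)

lemma gap_mul_one_sub_deltahat_le (hA : A.PosDef) (hB : B.IsHermitian) (hm : 0 < m)
    (hgap : 0 < gap Z y A) : gap Z y A * (1 - Deltahat Z y A B) ≤ gap Z y B := by
  refine le_of_eq_of_le ?_ (gap_sub_le_gap Z y hA hB hm)
  rw [Deltahat, ← gap]
  field_simp

lemma vnorm_del_le (hA : A.PosSemidef) :
    vnorm (del Z y A) ≤ √(lmax (Zᵀ * A * Z)) * √(y ⬝ᵥ A *ᵥ y) := by
  refine vnorm_le_of_forall_dotProduct_le (by positivity) fun x => ?_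
  calc del Z y A ⬝ᵥ x = (Z *ᵥ x) ⬝ᵥ A *ᵥ y := by
        rw [del, ← mulVec_mulVec, dotProduct_comm, dotProduct_transpose_mulVec, dotProduct_comm]
    _ ≤ √((Z *ᵥ x) ⬝ᵥ A *ᵥ (Z *ᵥ x)) * √(y ⬝ᵥ A *ᵥ y) :=
        dotProduct_mulVec_le_sqrt_mul_sqrt hA _ _
    _ ≤ √(lmax (Zᵀ * A * Z)) * vnorm x * √(y ⬝ᵥ A *ᵥ y) := by
        gcongr
        exact sqrt_dotProduct_mulVec_le_sqrt_lmax_mul hA.isHermitian Z x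
    _ = _ := by ring

lemma vnorm_del_sub_del_le (hA : A.PosDef) (B : Matrix (Fin p) (Fin p) ℝ) :
    vnorm (del Z y B - del Z y A) ≤
      spec A⁻¹ * spec (B - A) * (√(lmax (Zᵀ * A * Z)) * √(y ⬝ᵥ A *ᵥ y)) := by
  refine vnorm_le_of_forall_dotProduct_le
    (mul_nonneg (mul_nonneg (spec_nonneg _) (spec_nonneg _)) (by positivity)) fun x => ?_
  have hZx : vnorm (Z *ᵥ x) ≤ √(spec A⁻¹) * (√(lmax (Zᵀ * A * Z)) * vnorm x) :=
    (vnorm_le_sqrt_spec_inv_mul_sqrt hA _).trans (mul_le_mul_of_nonneg_left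
      (sqrt_dotProduct_mulVec_le_sqrt_lmax_mul hA.isHermitian Z x) (Real.sqrt_nonneg _))
  calc (del Z y B - del Z y A) ⬝ᵥ x = (Z *ᵥ x) ⬝ᵥ (B - A) *ᵥ y := by
        rw [del, del, ← sub_mulVec, ← Matrix.mul_sub, ← mulVec_mulVec, dotProduct_comm,
          dotProduct_transpose_mulVec, dotProduct_comm]
    _ ≤ vnorm (Z *ᵥ x) * (spec (B - A) * vnorm y) :=
        (dotProduct_le_vnorm_mul_vnorm _ _).trans
          (mul_le_mul_of_nonneg_left (vnorm_mulVec_le _ _) (vnorm_nonneg _))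
    _ ≤ √(spec A⁻¹) * (√(lmax (Zᵀ * A * Z)) * vnorm x) *
          (spec (B - A) * (√(spec A⁻¹) * √(y ⬝ᵥ A *ᵥ y))) :=
        mul_le_mul hZx
          (mul_le_mul_of_nonneg_left (vnorm_le_sqrt_spec_inv_mul_sqrt hA y) (spec_nonneg _))
          (mul_nonneg (spec_nonneg _) (vnorm_nonneg _)) ((vnorm_nonneg _).trans hZx)
    _ = _ := by
        linear_combination (√(lmax (Zᵀ * A * Z)) * vnorm x * spec (B - A) * √(y ⬝ᵥ A *ᵥ y)) *
          Real.mul_self_sqrt (spec_nonneg A⁻¹)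

lemma vnorm_del_le_one_add_mul (hA : A.PosDef) (B : Matrix (Fin p) (Fin p) ℝ) :
    vnorm (del Z y B) ≤
      (1 + spec A⁻¹ * spec (B - A)) * (√(lmax (Zᵀ * A * Z)) * √(y ⬝ᵥ A *ᵥ y)) := by
  calc vnorm (del Z y B) ≤ vnorm (del Z y A) + vnorm (del Z y B - del Z y A) := by
        simpa using vnorm_add_le (del Z y A) (del Z y B - del Z y A)
    _ ≤ _ := by
        linarith [vnorm_del_le Z y hA.posSemidef, vnorm_del_sub_del_le Z y hA B]

lemma isUnit_det_gam (hB : B.IsHermitian) (hgap : 0 < gap Z y B) : IsUnit (gam Z y B).det :=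
  (isUnit_iff_isUnit_det _).1 (gam_posDef Z y hB hgap).isUnit

lemma gap_mul_vnorm_betahat_le (hB : B.IsHermitian) (hgap : 0 < gap Z y B) :
    gap Z y B * vnorm (betahat Z y B) ≤ vnorm (del Z y B) := by
  simpa [betahat, mulVec_mulVec, mul_nonsing_inv _ (isUnit_det_gam Z y hB hgap)] using
    mul_vnorm_le_vnorm_mulVec (gap_mul_dotProduct_le Z y hB) (betahat Z y B)

end Estimator

theorem stmt7_general {p m : ℕ} (hm : 0 < m)
    (Z : Matrix (Fin p) (Fin m) ℝ) (y : Fin p → ℝ)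
    (A B : Matrix (Fin p) (Fin p) ℝ) (hA : A.PosDef) (hBsymm : B.IsSymm)
    (hgap : lmin ((appendCol Z y)ᵀ * A * appendCol Z y) < lmin (Zᵀ * A * Z))
    (hD : Deltahat Z y A B < 1) :
    IsUnit (gam Z y B).det ∧
      vnorm (betahat Z y B) ≤
        (1 + Deltahat Z y A B) / (1 - Deltahat Z y A B) * UB Z y A := by
  have hB : B.IsHermitian := (conjTranspose_eq_transpose_of_trivial B).trans hBsymm
  have hgapA : 0 < gap Z y A := sub_pos.2 hgap
  have hgapB := gap_mul_one_sub_deltahat_le Z y hA hB hm hgapA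
  have hgapB_pos : 0 < gap Z y B := (mul_pos hgapA (sub_pos.2 hD)).trans_le hgapB
  refine ⟨isUnit_det_gam Z y hB hgapB_pos, ?_⟩
  have hUB : UB Z y A = √(lmax (Zᵀ * A * Z)) * √(y ⬝ᵥ A *ᵥ y) / gap Z y A := rfl
  rw [hUB, div_mul_div_comm, le_div_iff₀ (mul_pos (sub_pos.2 hD) hgapA)]
  calc vnorm (betahat Z y B) * ((1 - Deltahat Z y A B) * gap Z y A)
      = gap Z y A * (1 - Deltahat Z y A B) * vnorm (betahat Z y B) := by ring
    _ ≤ gap Z y B * vnorm (betahat Z y B) := by gcongr; exact vnorm_nonneg _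
    _ ≤ vnorm (del Z y B) := gap_mul_vnorm_betahat_le Z y hB hgapB_pos
    _ ≤ (1 + spec A⁻¹ * spec (B - A)) * (√(lmax (Zᵀ * A * Z)) * √(y ⬝ᵥ A *ᵥ y)) :=
        vnorm_del_le_one_add_mul Z y hA B
    _ ≤ (1 + Deltahat Z y A B) * (√(lmax (Zᵀ * A * Z)) * √(y ⬝ᵥ A *ᵥ y)) := by
        gcongr; exact spec_mul_spec_le_deltahat Z y hA hgapA

/-- If `A` is symmetric positive definite with `λ_min(ZᵀAZ) > λ_min(WᵀAW)` (so
`β̂(A)` is well defined), `B` is symmetric, and `Δ̂ = Δ̂(B,A) < 1`, then `β̂(B)` is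
well defined and `‖β̂(B)‖ ≤ ((1+Δ̂)/(1−Δ̂))·UB(A)`. -/
theorem stmt7 {p m : ℕ} (hp : 0 < p) (hm : 0 < m)
    (Z : Matrix (Fin p) (Fin m) ℝ) (y : Fin p → ℝ)
    (A B : Matrix (Fin p) (Fin p) ℝ) (hA : A.PosDef) (hBsymm : B.IsSymm)
    (hgap : lmin ((appendCol Z y)ᵀ * A * appendCol Z y) < lmin (Zᵀ * A * Z))
    (hD : Deltahat Z y A B < 1) :
    IsUnit (gam Z y B).det ∧
      vnorm (betahat Z y B) ≤
        (1 + Deltahat Z y A B) / (1 - Deltahat Z y A B) * UB Z y A :=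
  stmt7_general hm Z y A B hA hBsymm hgap hD
end
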